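/- Let Q be a finite quiver without cycles of length m with starting set S, and let ⟨,⟩ be an inner product on n_Q for which Path(Q) is an orthogonal basis; write x̄ = x/|x| for x ∈ Path(Q). Then for each x ∈ S, the Ricci operator of (n_Q,⟨,⟩) satisfies Ric(x̄) = ( −(1/2) Σ_{y ∈ Path(Q), t(x)=s(y)} ⟨[x̄,ȳ], \overline{xy}⟩² ) x̄. -/

import Mathlib

open scoped Classical

noncomputable section

variable {V E : Type*}

/-- A (positive-length) path in the quiver `(V, E, s, t)`: a nonempty list of arrows
in which consecutive arrows are composable, i.e. `t αᵢ = s αᵢ₊₁`. -/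
def IsPath (s t : E → V) (l : List E) : Prop :=
  l ≠ [] ∧ l.Chain' (fun a b => t a = s b)

/-- The source of a (nonempty) list of arrows, as an `Option`. -/
def src? (s : E → V) (l : List E) : Option V := l.head?.map s

/-- The target of a (nonempty) list of arrows, as an `Option`. -/
def tgt? (t : E → V) (l : List E) : Option V := l.getLast?.map t

/-- The quiver has no cycles: there is no path whose source equals its target. -/
def NoCycles (s t : E → V) : Prop :=
  ∀ l : List E, IsPath s t l → src? s l ≠ tgt? t l

/-- `m` is the maximum of the lengths of paths of the quiver (the length of the quiver). -/
def IsMaxPathLen (s t : E → V) (m : ℕ) : Prop :=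
  (∃ l : List E, IsPath s t l ∧ l.length = m) ∧ ∀ l : List E, IsPath s t l → l.length ≤ m

/-- The set `Path(Q)` of all paths of length `≥ 1`, as a subtype of lists of arrows. -/
abbrev PathQ (s t : E → V) := {l : List E // IsPath s t l}

/-- The underlying vector space of the Lie algebra `n_Q` obtained from the quiver:
the real vector space with basis `Path(Q)`. -/
abbrev nQ (s t : E → V) := PathQ s t →₀ ℝ

/-- The Lie bracket of two basis paths: `[x, y] = xy` if the concatenation `xy` is a path,
`[x, y] = -yx` if the concatenation `yx` is a path, and `[x, y] = 0` otherwise. -/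
def braBasis (s t : E → V) (x y : PathQ s t) : nQ s t :=
  if h : IsPath s t (x.val ++ y.val) then Finsupp.single ⟨x.val ++ y.val, h⟩ 1
  else if h' : IsPath s t (y.val ++ x.val) then -Finsupp.single ⟨y.val ++ x.val, h'⟩ 1
  else 0

/-- The Lie bracket of `n_Q`, extended bilinearly from basis paths. -/
def bra (s t : E → V) (u v : nQ s t) : nQ s t :=
  u.sum fun x cx => v.sum fun y cy => (cx * cy) • braBasis s t x y

/-- The span of all brackets of elements of two subspaces of `n_Q`. -/
def braSpan (s t : E → V) (M N : Submodule ℝ (nQ s t)) : Submodule ℝ (nQ s t) :=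
  Submodule.span ℝ {z | ∃ u ∈ M, ∃ v ∈ N, z = bra s t u v}

/-- The starting set `S` of a quiver of length `m`: the set of arrows `a` such that
`a x` is a path of length `m` for some path `x`. -/
def startSet (s t : E → V) (m : ℕ) : Set E :=
  {a | ∃ x : List E, IsPath s t x ∧ IsPath s t (a :: x) ∧ (a :: x).length = m}

/-- The arrow set `E' = (E ∖ S) ∪ {ab ∈ Path(Q) : a ∈ S, b ∈ E}` of the quiver `Q'`,
realized as a set of lists of arrows of `Q`. -/
def edgesQ' (s t : E → V) (m : ℕ) : Set (List E) :=
  {l | (∃ a : E, a ∉ startSet s t m ∧ l = [a]) ∨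
       (∃ a b : E, a ∈ startSet s t m ∧ IsPath s t [a, b] ∧ l = [a, b])}

/-- `L` is a decomposition of the list `l` of arrows as a path of the quiver `Q'`:
a nonempty chain of consecutively composable `Q'`-arrows whose concatenation is `l`. -/
def IsDecompQ' (s t : E → V) (m : ℕ) (L : List (List E)) (l : List E) : Prop :=
  L ≠ [] ∧ (∀ p ∈ L, p ∈ edgesQ' s t m) ∧
    L.Chain' (fun p q => tgt? t p = src? s q) ∧ L.flatten = l

/-- `l` underlies a path of the quiver `Q'`. -/
def IsPathQ' (s t : E → V) (m : ℕ) (l : List E) : Prop :=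
  ∃ L : List (List E), IsDecompQ' s t m L l

/-- `f : E → E` is an automorphism of the quiver `(V, E, s, t)`. -/
def IsQuivAut (s t : E → V) (f : E → E) : Prop :=
  Function.Bijective f ∧ ∀ x y : E, (t x = s y ↔ t (f x) = s (f y))

/-- `g` is an automorphism of the quiver whose arrow set is the set `ES` of lists of
arrows of `Q` (such as the quiver `Q'` with arrow set `edgesQ'`). -/
def IsQuivAutOn (s t : E → V) (ES : Set (List E)) (g : List E → List E) : Prop :=
  Set.BijOn g ES ES ∧
    ∀ p ∈ ES, ∀ q ∈ ES, (tgt? t p = src? s q ↔ tgt? t (g p) = src? s (g q))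

/-- The subspace `n' = span Path(Q')` of `n_Q`. -/
def nQ'span (s t : E → V) (m : ℕ) : Submodule ℝ (nQ s t) :=
  Submodule.span ℝ {u | ∃ p : PathQ s t, IsPathQ' s t m p.val ∧ u = Finsupp.single p 1}

/-- A single arrow, regarded as a path of length one. -/
def edgePath (s t : E → V) (a : E) : PathQ s t := ⟨[a], by
  refine ⟨List.cons_ne_nil _ _, ?_⟩
  first
  | exact List.chain'_singleton _
  | exact List.isChain_singleton _
  | simp [List.Chain']
  | simp [List.IsChain]⟩

/-- The normalization `x̄ = x / |x|` of a basis path `x`, with respect to the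
inner product `B`. -/
def ebar (s t : E → V) (B : nQ s t →ₗ[ℝ] nQ s t →ₗ[ℝ] ℝ) (p : PathQ s t) : nQ s t :=
  (Real.sqrt (B (Finsupp.single p 1) (Finsupp.single p 1)))⁻¹ • Finsupp.single p 1


/-! Let `x` be the arrow `a ∈ S`. No path ends in `a` (prefixing the maximal path starting
with `a` would exceed the length `m`), so `[x̄, ȳ]` is a multiple of `(ay)‾` when `ay` is a path
and `0` otherwise, while `x̄`, having length one, is orthogonal to every bracket. Hence the
`1/4`-term of the Ricci formula vanishes, and `⟨[Y, ȳ], (ay)‾⟩` only sees the `x`-coordinate of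
`Y`; so `⟨Ric x̄, Y⟩` is the claimed multiple of `⟨x̄, Y⟩` for every basis path `Y`. -/

namespace Finsupp

variable {ι : Type*} (B : (ι →₀ ℝ) →ₗ[ℝ] (ι →₀ ℝ) →ₗ[ℝ] ℝ)

theorem bilin_single_single (horth : ∀ p q : ι, p ≠ q → B (single p 1) (single q 1) = 0)
    (p q : ι) (c d : ℝ) :
    B (single p c) (single q d) = if p = q then c * d * B (single p 1) (single p 1) else 0 := by
  rw [← smul_single_one p c, ← smul_single_one q d]
  simp only [map_smul, LinearMap.smul_apply, smul_eq_mul]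
  split_ifs with h
  · subst h; ring
  · rw [horth p q h, mul_zero, mul_zero]

theorem bilin_apply_single_right (horth : ∀ p q : ι, p ≠ q → B (single p 1) (single q 1) = 0)
    (u : ι →₀ ℝ) (q : ι) (d : ℝ) :
    B u (single q d) = u q * d * B (single q 1) (single q 1) := by
  induction u using induction_linear with
  | zero => simp
  | add u w hu hw => simp only [map_add, LinearMap.add_apply, hu, hw, coe_add, Pi.add_apply]; ring
  | single p c =>
    rw [bilin_single_single B horth, single_apply]
    split_ifs with h
    · subst h; rfl
    · ring

theorem eq_of_forall_bilin_single_eq (hpos : ∀ u : ι →₀ ℝ, u ≠ 0 → 0 < B u u)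
    {u w : ι →₀ ℝ} (h : ∀ p : ι, B u (single p 1) = B w (single p 1)) : u = w := by
  have hB : B (u - w) = 0 := by
    refine lhom_ext fun p c => ?_
    rw [← smul_single_one p c, map_sub, LinearMap.sub_apply, map_smul, map_smul, h p, sub_self,
      LinearMap.zero_apply]
  by_contra hne
  simpa [hB] using hpos (u - w) (sub_ne_zero.mpr hne)

end Finsupp

theorem List.eq_of_append_singleton_eq_cons {α : Type*} :
    ∀ {l : List α} {a b : α}, l ++ [a] = b :: l → a = b
  | [], _, _, h => by simpa using h
  | c :: l, a, b, h => by
    simp only [List.cons_append, List.cons.injEq] at h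
    exact (List.eq_of_append_singleton_eq_cons h.2).trans h.1

section Quiver

variable {s t : E → V}

theorem bra_single_single (p q : PathQ s t) (c d : ℝ) :
    bra s t (Finsupp.single p c) (Finsupp.single q d) = (c * d) • braBasis s t p q := by
  simp [bra, Finsupp.sum_single_index]

theorem finite_pathQ [Finite E] {m : ℕ} (hm : ∀ l, IsPath s t l → l.length ≤ m) :
    Finite (PathQ s t) :=
  ((List.finite_length_le E m).subset fun l hl => hm l hl).to_subtype

theorem not_isPath_append_singleton {m : ℕ} (hm : ∀ l, IsPath s t l → l.length ≤ m)
    {a : E} (ha : a ∈ startSet s t m) {l : List E} (hl : l ≠ []) : ¬ IsPath s t (l ++ [a]) := by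
  intro hp
  obtain ⟨x, -, hax, hlen⟩ := ha
  have hchain := hp.2
  rw [List.Chain', List.isChain_append] at hchain
  obtain ⟨hl_chain, -, hjoin⟩ := hchain
  have hlong : IsPath s t (l ++ a :: x) := by
    refine ⟨by simp [hl], hl_chain.append hax.2 fun b hb c hc => ?_⟩
    obtain rfl : c = a := by simpa using hc.symm
    exact hjoin b hb c (by simp)
  have := hm _ hlong
  have := List.length_pos_iff.mpr hl
  simp only [List.length_append] at *
  omega

theorem braBasis_apply_edgePath (p q : PathQ s t) (a : E) :
    braBasis s t p q (edgePath s t a) = 0 := by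
  have hne : ∀ (l : List E) (h : IsPath s t l), 2 ≤ l.length →
      (⟨l, h⟩ : PathQ s t) ≠ edgePath s t a := fun l h hl hEq => by
    have := congrArg (fun r : PathQ s t => r.val.length) hEq
    simp [edgePath] at this
    omega
  have hp := List.length_pos_iff.mpr p.2.1
  have hq := List.length_pos_iff.mpr q.2.1
  unfold braBasis
  split_ifs with h₁ h₂
  · exact Finsupp.single_eq_of_ne (hne _ h₁ (by simp; omega)).symm
  · simp [Finsupp.single_eq_of_ne (hne _ h₂ (by simp; omega)).symm]
  · rfl

theorem braBasis_edgePath_left {m : ℕ} (hm : ∀ l, IsPath s t l → l.length ≤ m) {a : E}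
    (ha : a ∈ startSet s t m) (q : PathQ s t) :
    braBasis s t (edgePath s t a) q =
      if h : IsPath s t (a :: q.val) then Finsupp.single ⟨a :: q.val, h⟩ 1 else 0 := by
  have hrev := not_isPath_append_singleton hm ha q.2.1
  by_cases h : IsPath s t (a :: q.val) <;> simp [braBasis, edgePath, h, hrev]

theorem braBasis_apply_cons {m : ℕ} (hm : ∀ l, IsPath s t l → l.length ≤ m) {a : E}
    (ha : a ∈ startSet s t m) (p q : PathQ s t) (h : IsPath s t (a :: q.val)) :
    braBasis s t p q ⟨a :: q.val, h⟩ = if p = edgePath s t a then 1 else 0 := by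
  split_ifs with hp
  · simp [hp, braBasis_edgePath_left hm ha, h]
  unfold braBasis
  split_ifs with h₁ h₂
  · exact Finsupp.single_eq_of_ne fun hEq =>
      hp (Subtype.ext (List.append_cancel_right (congrArg Subtype.val hEq).symm))
  · refine neg_eq_zero.mpr (Finsupp.single_eq_of_ne fun hEq => ?_)
    have hval : q.val ++ p.val = a :: q.val := (congrArg Subtype.val hEq).symm
    obtain ⟨c, hc⟩ : ∃ c, p.val = [c] := List.length_eq_one_iff.mp (by
      have := congrArg List.length hval
      simp only [List.length_append, List.length_cons] at this
      omega)
    rw [hc] at hval h₂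
    rw [List.eq_of_append_singleton_eq_cons hval] at h₂
    exact not_isPath_append_singleton hm ha q.2.1 h₂
  · rfl

end Quiver

section Metric

variable {s t : E → V} (B : nQ s t →ₗ[ℝ] nQ s t →ₗ[ℝ] ℝ)

def pathNorm (p : PathQ s t) : ℝ :=
  √(B (Finsupp.single p 1) (Finsupp.single p 1))

theorem ebar_eq_single (p : PathQ s t) : ebar s t B p = Finsupp.single p (pathNorm B p)⁻¹ := by
  rw [ebar, pathNorm, Finsupp.smul_single', mul_one]

variable {B}

theorem pathNorm_pos (hpos : ∀ u : nQ s t, u ≠ 0 → 0 < B u u) (p : PathQ s t) :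
    0 < pathNorm B p :=
  Real.sqrt_pos.mpr (hpos _ (Finsupp.single_ne_zero.mpr one_ne_zero))

theorem pathNorm_mul_self (hpos : ∀ u : nQ s t, u ≠ 0 → 0 < B u u) (p : PathQ s t) :
    pathNorm B p * pathNorm B p = B (Finsupp.single p 1) (Finsupp.single p 1) :=
  Real.mul_self_sqrt (hpos _ (Finsupp.single_ne_zero.mpr one_ne_zero)).le

theorem bilin_apply_ebar (hpos : ∀ u : nQ s t, u ≠ 0 → 0 < B u u)
    (horth : ∀ p q : PathQ s t, p ≠ q → B (Finsupp.single p 1) (Finsupp.single q 1) = 0)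
    (u : nQ s t) (j : PathQ s t) :
    B u (ebar s t B j) = u j * pathNorm B j := by
  have hr := (pathNorm_pos hpos j).ne'
  rw [ebar_eq_single, Finsupp.bilin_apply_single_right B horth, ← pathNorm_mul_self hpos]
  field_simp

theorem bilin_bra_ebar_ebar_edgePath (hpos : ∀ u : nQ s t, u ≠ 0 → 0 < B u u)
    (horth : ∀ p q : PathQ s t, p ≠ q → B (Finsupp.single p 1) (Finsupp.single q 1) = 0)
    (i j : PathQ s t) (a : E) :
    B (bra s t (ebar s t B i) (ebar s t B j)) (ebar s t B (edgePath s t a)) = 0 := by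
  rw [bilin_apply_ebar hpos horth, ebar_eq_single, ebar_eq_single, bra_single_single,
    Finsupp.smul_apply, braBasis_apply_edgePath, smul_zero, zero_mul]

theorem sum_bilin_bra_ebar_edgePath [Fintype (PathQ s t)]
    (hpos : ∀ u : nQ s t, u ≠ 0 → 0 < B u u)
    (horth : ∀ p q : PathQ s t, p ≠ q → B (Finsupp.single p 1) (Finsupp.single q 1) = 0) {m : ℕ}
    (hm : ∀ l, IsPath s t l → l.length ≤ m) {a : E} (ha : a ∈ startSet s t m) (p i : PathQ s t) :
    ∑ j, B (bra s t (ebar s t B (edgePath s t a)) (ebar s t B i)) (ebar s t B j) *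
        B (bra s t (Finsupp.single p 1) (ebar s t B i)) (ebar s t B j) =
      (if h : IsPath s t (a :: i.val) then
        B (bra s t (ebar s t B (edgePath s t a)) (ebar s t B i)) (ebar s t B ⟨a :: i.val, h⟩) ^ 2
      else 0) * B (ebar s t B (edgePath s t a)) (Finsupp.single p 1) := by
  simp only [bilin_apply_ebar hpos horth, ebar_eq_single B i, ebar_eq_single B (edgePath s t a),
    bra_single_single, Finsupp.smul_apply, braBasis_edgePath_left hm ha, smul_eq_mul]
  split_ifs with h
  · have hx := (pathNorm_pos hpos (edgePath s t a)).ne'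
    have hi := (pathNorm_pos hpos i).ne'
    rw [Finset.sum_eq_single_of_mem (⟨a :: i.val, h⟩ : PathQ s t) (Finset.mem_univ _)
        fun j _ hj => by simp [Ne.symm hj],
      braBasis_apply_cons hm ha, Finsupp.bilin_single_single B horth, ← pathNorm_mul_self hpos]
    by_cases hp : p = edgePath s t a
    · subst hp
      simp only [Finsupp.single_eq_same, mul_one, one_mul, ↓reduceIte]
      field_simp
    · simp [hp, Ne.symm hp]
  · simp

end Metric

theorem ricci_of_startSet_arrow_general [Finite E] (s t : E → V)
    (m : ℕ) (hm : IsMaxPathLen s t m)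
    (B : nQ s t →ₗ[ℝ] nQ s t →ₗ[ℝ] ℝ)
    (hpos : ∀ u : nQ s t, u ≠ 0 → 0 < B u u)
    (horth : ∀ p q : PathQ s t, p ≠ q →
      B (Finsupp.single p 1) (Finsupp.single q 1) = 0)
    (Ric : nQ s t →ₗ[ℝ] nQ s t)
    (hRic : ∀ X Y : nQ s t, B (Ric X) Y =
      -(1/2) * (∑ᶠ i : PathQ s t, ∑ᶠ j : PathQ s t,
        B (bra s t X (ebar s t B i)) (ebar s t B j) *
          B (bra s t Y (ebar s t B i)) (ebar s t B j))
      + (1/4) * (∑ᶠ i : PathQ s t, ∑ᶠ j : PathQ s t,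
        B (bra s t (ebar s t B i) (ebar s t B j)) X *
          B (bra s t (ebar s t B i) (ebar s t B j)) Y))
    (a : E) (ha : a ∈ startSet s t m) :
    Ric (ebar s t B (edgePath s t a)) =
      (-(1/2) * ∑ᶠ y : PathQ s t,
        (if h : IsPath s t (a :: y.val) then
          (B (bra s t (ebar s t B (edgePath s t a)) (ebar s t B y))
            (ebar s t B ⟨a :: y.val, h⟩)) ^ 2
        else 0)) • ebar s t B (edgePath s t a) := by
  have := finite_pathQ hm.2
  have := Fintype.ofFinite (PathQ s t)
  refine Finsupp.eq_of_forall_bilin_single_eq B hpos fun p => ?_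
  simp only [hRic, finsum_eq_sum_of_fintype, bilin_bra_ebar_ebar_edgePath hpos horth, zero_mul,
    Finset.sum_const_zero, mul_zero, add_zero, sum_bilin_bra_ebar_edgePath hpos horth hm.2 ha,
    ← Finset.sum_mul, map_smul, LinearMap.smul_apply, smul_eq_mul, mul_assoc]

/-- Let `Q` be a finite quiver without cycles of length `m` with
starting set `S`, and let `⟨,⟩ = B` be an inner product on `n_Q` making `Path(Q)` an
orthogonal basis. Then for every `x ∈ S`, the Ricci operator of `(n_Q, B)` (the
operator determined by the standard formula with respect to the orthonormal basis of
normalized paths) satisfies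
`Ric x̄ = (-(1/2) Σ_{y ∈ Path(Q), t(x) = s(y)} ⟨[x̄, ȳ], (xy)‾⟩²) • x̄`. -/
theorem ricci_of_startSet_arrow [Finite V] [Finite E] (s t : E → V)
    (hQ : NoCycles s t) (m : ℕ) (hm : IsMaxPathLen s t m)
    (B : nQ s t →ₗ[ℝ] nQ s t →ₗ[ℝ] ℝ)
    (hsym : ∀ u v : nQ s t, B u v = B v u)
    (hpos : ∀ u : nQ s t, u ≠ 0 → 0 < B u u)
    (horth : ∀ p q : PathQ s t, p ≠ q →
      B (Finsupp.single p 1) (Finsupp.single q 1) = 0)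
    (Ric : nQ s t →ₗ[ℝ] nQ s t)
    (hRic : ∀ X Y : nQ s t, B (Ric X) Y =
      -(1/2) * (∑ᶠ i : PathQ s t, ∑ᶠ j : PathQ s t,
        B (bra s t X (ebar s t B i)) (ebar s t B j) *
          B (bra s t Y (ebar s t B i)) (ebar s t B j))
      + (1/4) * (∑ᶠ i : PathQ s t, ∑ᶠ j : PathQ s t,
        B (bra s t (ebar s t B i) (ebar s t B j)) X *
          B (bra s t (ebar s t B i) (ebar s t B j)) Y))
    (a : E) (ha : a ∈ startSet s t m) :
    Ric (ebar s t B (edgePath s t a)) =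
      (-(1/2) * ∑ᶠ y : PathQ s t,
        (if h : IsPath s t (a :: y.val) then
          (B (bra s t (ebar s t B (edgePath s t a)) (ebar s t B y))
            (ebar s t B ⟨a :: y.val, h⟩)) ^ 2
        else 0)) • ebar s t B (edgePath s t a) :=
  ricci_of_startSet_arrow_general s t m hm B hpos horth Ric hRic a ha

end
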